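/- arXiv:1411.1516 — 5 statements merged into one kernel-verified Lean document; each statement's English description precedes it below -/
import Mathlib

section
/- Under condition H1, for every λ ∈ ℝ one has ψ_{α,t}(λ) → ψ_{α,C±}(λ) as t → 0+. -/
open MeasureTheory Real Filter Set Topology

/-- The `α`-stable Lévy density with constants `Cp` (for `u > 0`) and `Cm` (for `u < 0`). -/
noncomputable def stableDensity (α Cp Cm : ℝ) (u : ℝ) : ℝ :=
  if 0 < u then Cp * |u| ^ (-α - 1) else Cm * |u| ^ (-α - 1)

/-- The characteristic exponent `ψ_{α,t}(λ)` of the rescaled locally stable process. -/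
noncomputable def psiT (m : ℝ → ℝ) (α t lam : ℝ) : ℂ :=
  (t : ℂ) * ∫ u : ℝ,
    (Complex.exp (Complex.I * ((lam * t ^ (-1 / α) * u : ℝ) : ℂ)) - 1 -
      Complex.I * ((lam * t ^ (-1 / α) * u : ℝ) : ℂ) *
        (if |u| ≤ t ^ (1 / α) then (1 : ℂ) else 0)) * ((m u : ℝ) : ℂ)

/-- The limiting `α`-stable characteristic exponent `ψ_{α,C±}(λ)`. -/
noncomputable def psiLimit (α Cp Cm lam : ℝ) : ℂ :=
  ∫ v : ℝ,
    (Complex.exp (Complex.I * ((lam * v : ℝ) : ℂ)) - 1 -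
      Complex.I * ((lam * v : ℝ) : ℂ) * (if |v| ≤ 1 then (1 : ℂ) else 0)) *
      ((stableDensity α Cp Cm v : ℝ) : ℂ)

/-! Substituting `u = t^{1/α} v` turns `ψ_{α,t}(λ)` into `∫ F_λ(v) t^{1+1/α} m(t^{1/α} v) dv`, where
`F_λ = compensatedExp λ` is the integrand of `ψ_{α,C±}`. Cut `m` off outside a ball `|u| < δ` on which `|u|^{α+1} m(u)`
is bounded. Inside, the rescaled density is dominated by a multiple of `|v|^{-α-1}` and tends to
`m_{α,C±}` pointwise by H1; since `|F_λ(v)| ≲ min(1, v²)`, dominated convergence applies. Outside,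
`F_λ` is bounded and `m` is integrable, so that part is `O(t)`. -/

noncomputable def compensatedExp (lam v : ℝ) : ℂ :=
  Complex.exp (Complex.I * ((lam * v : ℝ) : ℂ)) - 1 -
    Complex.I * ((lam * v : ℝ) : ℂ) * (if |v| ≤ 1 then (1 : ℂ) else 0)

lemma measurable_compensatedExp (lam : ℝ) : Measurable (compensatedExp lam) := by
  unfold compensatedExp
  refine Measurable.sub (by fun_prop) (Measurable.mul (by fun_prop) ?_)
  exact Measurable.ite (measurableSet_le measurable_abs measurable_const)
    measurable_const measurable_const

lemma norm_exp_I_mul_sub_one_sub_le (x : ℝ) :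
    ‖Complex.exp (Complex.I * x) - 1 - Complex.I * x‖ ≤ 2 * x ^ 2 := by
  have hIx : ‖Complex.I * x‖ = |x| := by simp
  rcases le_or_gt |x| 1 with hx | hx
  · calc _ ≤ ‖Complex.I * x‖ ^ 2 := Complex.norm_exp_sub_one_sub_id_le (hIx ▸ hx)
      _ ≤ 2 * x ^ 2 := by rw [hIx, sq_abs]; nlinarith [sq_nonneg x]
  · calc _ ≤ ‖Complex.exp (Complex.I * x) - 1‖ + ‖Complex.I * x‖ := norm_sub_le _ _
      _ ≤ |x| + |x| := by rw [hIx]; gcongr; exact Real.norm_exp_I_mul_ofReal_sub_one_le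
      _ ≤ 2 * x ^ 2 := by nlinarith [sq_abs x]

lemma norm_compensatedExp_le (lam v : ℝ) :
    ‖compensatedExp lam v‖ ≤ 2 * (1 + lam ^ 2) * min 1 (v ^ 2) := by
  unfold compensatedExp
  split_ifs with hv
  · have hv2 : v ^ 2 ≤ 1 := by nlinarith [sq_abs v, abs_nonneg v]
    rw [mul_one, min_eq_right hv2]
    calc _ ≤ 2 * (lam * v) ^ 2 := norm_exp_I_mul_sub_one_sub_le _
      _ ≤ 2 * (1 + lam ^ 2) * v ^ 2 := by nlinarith [sq_nonneg v]
  · have hv2 : 1 ≤ v ^ 2 := by nlinarith [sq_abs v]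
    rw [mul_zero, sub_zero, min_eq_left hv2]
    calc _ ≤ ‖Complex.exp (Complex.I * ((lam * v : ℝ) : ℂ))‖ + ‖(1 : ℂ)‖ := norm_sub_le _ _
      _ ≤ 2 * (1 + lam ^ 2) * 1 := by
        rw [Complex.norm_exp_I_mul_ofReal, norm_one]; nlinarith [sq_nonneg lam]

lemma norm_compensatedExp_le_const (lam v : ℝ) : ‖compensatedExp lam v‖ ≤ 2 * (1 + lam ^ 2) :=
  (norm_compensatedExp_le lam v).trans
    (mul_le_of_le_one_right (by positivity) (min_le_left _ _))

lemma min_one_sq_mul_le (c u : ℝ) : min 1 ((c * u) ^ 2) ≤ (1 + c ^ 2) * min 1 (u ^ 2) := by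
  rw [mul_min_of_nonneg _ _ (by positivity), mul_one, mul_pow]
  exact min_le_min (by nlinarith [sq_nonneg c]) (by nlinarith [sq_nonneg c, sq_nonneg u])

lemma integrable_min_one_sq_mul_abs_rpow {α : ℝ} (hα : α ∈ Ioo (0 : ℝ) 2) :
    Integrable (fun v : ℝ => min 1 (v ^ 2) * |v| ^ (-α - 1)) := by
  have hnear : IntegrableOn (fun y : ℝ => y ^ (1 - α)) (Ioc 0 1) := by
    simpa using (intervalIntegral.intervalIntegrable_rpow' (a := 0) (b := 1)
      (r := 1 - α) (by linarith [hα.2])).1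
  have hfar : IntegrableOn (fun y : ℝ => y ^ (-α - 1)) (Ioi 1) :=
    integrableOn_Ioi_rpow_of_lt (by linarith [hα.1]) one_pos
  have hradial : IntegrableOn (fun y : ℝ => min 1 (y ^ 2) * y ^ (-α - 1)) (Ioi 0) := by
    rw [← Ioc_union_Ioi_eq_Ioi zero_le_one]
    refine (hnear.congr_fun (fun y hy => ?_) measurableSet_Ioc).union
      (hfar.congr_fun (fun y hy => ?_) measurableSet_Ioi)
    · have hy2 : y ^ 2 ≤ 1 := by nlinarith [hy.1, hy.2]
      rw [min_eq_right hy2, ← Real.rpow_two, ← Real.rpow_add hy.1]; ring_nf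
    · have hy2 : 1 ≤ y ^ 2 := by nlinarith [mem_Ioi.1 hy]
      rw [min_eq_left hy2, one_mul]
  have := (integrable_fun_norm_addHaar (volume : Measure ℝ)
    (f := fun y : ℝ => min 1 (y ^ 2) * y ^ (-α - 1))).2 (by simpa using hradial)
  simpa [Real.norm_eq_abs, sq_abs] using this

noncomputable def rescaledDensity (α : ℝ) (f : ℝ → ℝ) (t v : ℝ) : ℝ :=
  t ^ (1 + 1 / α) * f (t ^ (1 / α) * v)

lemma rescaledDensity_eq {α t v : ℝ} (hα : α ≠ 0) (ht : 0 < t) (hv : v ≠ 0) (f : ℝ → ℝ) :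
    rescaledDensity α f t v =
      |t ^ (1 / α) * v| ^ (α + 1) * f (t ^ (1 / α) * v) * |v| ^ (-α - 1) := by
  have hpow : t ^ (1 + 1 / α) = (t ^ (1 / α)) ^ (α + 1) := by
    rw [← Real.rpow_mul ht.le]; congr 1; field_simp
  rw [rescaledDensity, abs_mul, abs_of_pos (Real.rpow_pos_of_pos ht _),
    Real.mul_rpow (Real.rpow_nonneg ht.le _) (abs_nonneg v), hpow]
  have hcancel : |v| ^ (α + 1) * |v| ^ (-α - 1) = 1 := by
    rw [← Real.rpow_add (abs_pos.2 hv)]; ring_nf; exact Real.rpow_zero _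
  linear_combination (t ^ (1 / α)) ^ (α + 1) * f (t ^ (1 / α) * v) * hcancel.symm

lemma abs_rescaledDensity_le {α K t v : ℝ} {f : ℝ → ℝ} (hα : α ≠ 0)
    (hK : ∀ w ≠ 0, |w| ^ (α + 1) * |f w| ≤ K) (ht : 0 < t) (hv : v ≠ 0) :
    |rescaledDensity α f t v| ≤ K * |v| ^ (-α - 1) := by
  rw [rescaledDensity_eq hα ht hv, abs_mul, abs_mul,
    abs_of_nonneg (Real.rpow_nonneg (abs_nonneg _) _),
    abs_of_nonneg (Real.rpow_nonneg (abs_nonneg _) _)]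
  exact mul_le_mul_of_nonneg_right
    (hK _ (mul_ne_zero (Real.rpow_pos_of_pos ht _).ne' hv)) (Real.rpow_nonneg (abs_nonneg _) _)

lemma tendsto_rescaledDensity {α Cp Cm v : ℝ} {f : ℝ → ℝ} (hα : 0 < α)
    (hp : Tendsto (fun u => |u| ^ (α + 1) * f u) (𝓝[>] 0) (𝓝 Cp))
    (hm : Tendsto (fun u => |u| ^ (α + 1) * f u) (𝓝[<] 0) (𝓝 Cm)) (hv : v ≠ 0) :
    Tendsto (fun t => rescaledDensity α f t v) (𝓝[>] 0) (𝓝 (stableDensity α Cp Cm v)) := by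
  have hscale : Tendsto (fun t : ℝ => t ^ (1 / α) * v) (𝓝[>] 0) (𝓝 0) := by
    have := ((Real.continuous_rpow_const (by positivity : (0 : ℝ) ≤ 1 / α)).tendsto 0).mul_const v
    rw [Real.zero_rpow (by positivity), zero_mul] at this
    exact this.mono_left nhdsWithin_le_nhds
  have hsign (s : Set ℝ) (hs : ∀ t > 0, t ^ (1 / α) * v ∈ s) :
      Tendsto (fun t : ℝ => t ^ (1 / α) * v) (𝓝[>] 0) (𝓝[s] 0) :=
    tendsto_nhdsWithin_iff.2 ⟨hscale, eventually_nhdsWithin_of_forall hs⟩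
  have hlim : Tendsto (fun t => |t ^ (1 / α) * v| ^ (α + 1) * f (t ^ (1 / α) * v))
      (𝓝[>] 0) (𝓝 (if 0 < v then Cp else Cm)) := by
    split_ifs with hpos
    · exact hp.comp (hsign _ fun t ht => mul_pos (Real.rpow_pos_of_pos ht _) hpos)
    · exact hm.comp (hsign _ fun t ht =>
        mul_neg_of_pos_of_neg (Real.rpow_pos_of_pos ht _) (lt_of_le_of_ne (not_lt.1 hpos) hv))
  have hdens : stableDensity α Cp Cm v = (if 0 < v then Cp else Cm) * |v| ^ (-α - 1) := by
    unfold stableDensity; split_ifs <;> rfl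
  rw [hdens]
  refine (hlim.mul_const _).congr' (eventually_nhdsWithin_of_forall fun t ht => ?_)
  exact (rescaledDensity_eq hα.ne' ht hv f).symm

lemma tendsto_integral_compensatedExp_mul_rescaledDensity {α Cp Cm K : ℝ} {f : ℝ → ℝ}
    (hα : α ∈ Ioo (0 : ℝ) 2) (hf : Measurable f) (hK : ∀ w ≠ 0, |w| ^ (α + 1) * |f w| ≤ K)
    (hp : Tendsto (fun u => |u| ^ (α + 1) * f u) (𝓝[>] 0) (𝓝 Cp))
    (hm : Tendsto (fun u => |u| ^ (α + 1) * f u) (𝓝[<] 0) (𝓝 Cm)) (lam : ℝ) :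
    Tendsto (fun t => ∫ v, compensatedExp lam v * (rescaledDensity α f t v : ℂ)) (𝓝[>] 0)
      (𝓝 (psiLimit α Cp Cm lam)) := by
  refine tendsto_integral_filter_of_dominated_convergence
    (fun v => 2 * (1 + lam ^ 2) * K * (min 1 (v ^ 2) * |v| ^ (-α - 1))) ?_ ?_
    ((integrable_min_one_sq_mul_abs_rpow hα).const_mul _) ?_
  · refine Eventually.of_forall fun t => ?_
    have : Measurable (rescaledDensity α f t) := by unfold rescaledDensity; fun_prop
    exact ((measurable_compensatedExp lam).mul
      (Complex.measurable_ofReal.comp this)).aestronglyMeasurable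
  · filter_upwards [self_mem_nhdsWithin] with t ht
    filter_upwards [volume.ae_ne 0] with v hv
    rw [norm_mul, Complex.norm_real, Real.norm_eq_abs]
    calc _ ≤ 2 * (1 + lam ^ 2) * min 1 (v ^ 2) * (K * |v| ^ (-α - 1)) :=
          mul_le_mul (norm_compensatedExp_le lam v) (abs_rescaledDensity_le hα.1.ne' hK ht hv)
            (abs_nonneg _) (by positivity)
      _ = _ := by ring
  · filter_upwards [volume.ae_ne 0] with v hv
    exact ((Complex.continuous_ofReal.tendsto _).comp
      (tendsto_rescaledDensity hα.1 hp hm hv)).const_mul _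

lemma mul_integral_compensatedExp_eq_integral_rescaledDensity {α t : ℝ} (ht : 0 < t)
    (lam : ℝ) (f : ℝ → ℝ) :
    t * ∫ u, compensatedExp lam ((t ^ (1 / α))⁻¹ * u) * (f u : ℂ) =
      ∫ v, compensatedExp lam v * (rescaledDensity α f t v : ℂ) := by
  have ha : 0 < t ^ (1 / α) := Real.rpow_pos_of_pos ht _
  have hcov := Measure.integral_comp_mul_left
    (fun u => compensatedExp lam ((t ^ (1 / α))⁻¹ * u) * (f u : ℂ)) (t ^ (1 / α))
  simp only [← mul_assoc, inv_mul_cancel₀ ha.ne', one_mul, abs_inv, abs_of_pos ha] at hcov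
  rw [← inv_smul_eq_iff₀ (inv_ne_zero ha.ne'), inv_inv] at hcov
  rw [← hcov, Complex.real_smul, ← mul_assoc, ← integral_const_mul]
  congr 1 with v
  rw [rescaledDensity, Real.rpow_add ht, Real.rpow_one]
  push_cast; ring

lemma psiT_eq_integral_compensatedExp {α t : ℝ} (ht : 0 < t) (m : ℝ → ℝ) (lam : ℝ) :
    psiT m α t lam = t * ∫ u, compensatedExp lam ((t ^ (1 / α))⁻¹ * u) * (m u : ℂ) := by
  have ha : 0 < t ^ (1 / α) := Real.rpow_pos_of_pos ht _
  have hinv : t ^ (-1 / α) = (t ^ (1 / α))⁻¹ := by rw [neg_div, Real.rpow_neg ht.le]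
  unfold psiT compensatedExp
  congr 2 with u
  simp only [hinv, mul_assoc, abs_mul, abs_inv, abs_of_pos ha, inv_mul_le_one₀ ha]

lemma integrable_compensatedExp_comp_mul {m : ℝ → ℝ} (hm : Measurable m)
    (hm_int : Integrable (fun u => min 1 (u ^ 2) * m u)) (lam c : ℝ) :
    Integrable (fun u => compensatedExp lam (c * u) * (m u : ℂ)) := by
  refine (hm_int.norm.const_mul (2 * (1 + lam ^ 2) * (1 + c ^ 2))).mono'
    (((measurable_compensatedExp lam).comp (measurable_const_mul c)).mul
      (Complex.measurable_ofReal.comp hm)).aestronglyMeasurable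
    (Eventually.of_forall fun u => ?_)
  have hmin : 0 ≤ min 1 (u ^ 2) := le_min zero_le_one (sq_nonneg u)
  calc ‖compensatedExp lam (c * u) * (m u : ℂ)‖ = ‖compensatedExp lam (c * u)‖ * |m u| := by
        rw [norm_mul, Complex.norm_real, Real.norm_eq_abs]
    _ ≤ 2 * (1 + lam ^ 2) * min 1 ((c * u) ^ 2) * |m u| := by
        gcongr; exact norm_compensatedExp_le lam _
    _ ≤ 2 * (1 + lam ^ 2) * ((1 + c ^ 2) * min 1 (u ^ 2)) * |m u| := by
        gcongr; exact min_one_sq_mul_le c u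
    _ = _ := by rw [norm_mul, Real.norm_of_nonneg hmin, Real.norm_eq_abs]; ring

lemma integrableOn_compl_ball {m : ℝ → ℝ} (hm : Measurable m)
    (hm_int : Integrable (fun u => min 1 (u ^ 2) * m u)) {δ : ℝ} (hδ : 0 < δ) :
    IntegrableOn m (Metric.ball 0 δ)ᶜ := by
  have hδ2 : 0 < min 1 (δ ^ 2) := by positivity
  refine (hm_int.norm.const_mul (min 1 (δ ^ 2))⁻¹).integrableOn.mono'
    hm.aestronglyMeasurable.restrict
    ((ae_restrict_iff' measurableSet_ball.compl).2 (Eventually.of_forall fun u hu => ?_))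
  have hδu : δ ≤ |u| := by simpa using hu
  have hmin : min 1 (δ ^ 2) ≤ min 1 (u ^ 2) :=
    min_le_min le_rfl (by nlinarith [sq_abs u, abs_nonneg u])
  rw [norm_mul, Real.norm_of_nonneg (hδ2.le.trans hmin), ← mul_assoc]
  exact le_mul_of_one_le_left (norm_nonneg _) ((one_le_inv_mul₀ hδ2).2 hmin)

lemma tendsto_mul_setIntegral_compensatedExp {m : ℝ → ℝ} {s : Set ℝ} (hm : IntegrableOn m s)
    (lam : ℝ) (c : ℝ → ℝ) :
    Tendsto (fun t => t * ∫ u in s, compensatedExp lam (c t * u) * (m u : ℂ)) (𝓝 0) (𝓝 0) := by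
  have hbound (t : ℝ) : ‖∫ u in s, compensatedExp lam (c t * u) * (m u : ℂ)‖ ≤
      ∫ u in s, 2 * (1 + lam ^ 2) * ‖m u‖ := by
    refine norm_integral_le_of_norm_le (hm.norm.const_mul _) (Eventually.of_forall fun u => ?_)
    rw [norm_mul, Complex.norm_real]
    gcongr; exact norm_compensatedExp_le_const lam _
  refine squeeze_zero_norm (fun t => ?_) ((continuous_norm.mul continuous_const).tendsto' 0 0
    (by simp) : Tendsto (fun t : ℝ => ‖t‖ * ∫ u in s, 2 * (1 + lam ^ 2) * ‖m u‖) _ _)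
  rw [norm_mul, Complex.norm_real]
  exact mul_le_mul_of_nonneg_left (hbound t) (norm_nonneg _)

lemma exists_abs_le_of_tendsto_nhdsGT_nhdsLT {g : ℝ → ℝ} {a b : ℝ}
    (ha : Tendsto g (𝓝[>] 0) (𝓝 a)) (hb : Tendsto g (𝓝[<] 0) (𝓝 b)) :
    ∃ δ > 0, ∀ w ∈ Metric.ball (0 : ℝ) δ, w ≠ 0 → |g w| ≤ |a| + |b| + 1 := by
  have h : ∀ᶠ w in 𝓝[≠] (0 : ℝ), |g w| ≤ |a| + |b| + 1 := by
    rw [← nhdsLT_sup_nhdsGT, eventually_sup]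
    exact ⟨(hb.abs.eventually_lt_const (by linarith [abs_nonneg a])).mono fun _ => le_of_lt,
      (ha.abs.eventually_lt_const (by linarith [abs_nonneg b])).mono fun _ => le_of_lt⟩
  exact Metric.eventually_nhds_iff_ball.1 (eventually_nhdsWithin_iff.1 h)

lemma psiT_eq_integral_rescaledDensity_add {α t : ℝ} (ht : 0 < t) {m : ℝ → ℝ}
    (hm : Measurable m) (hm_int : Integrable (fun u => min 1 (u ^ 2) * m u)) {s : Set ℝ}
    (hs : MeasurableSet s) (lam : ℝ) :
    psiT m α t lam =
      (∫ v, compensatedExp lam v * (rescaledDensity α (s.indicator m) t v : ℂ)) +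
        t * ∫ u in sᶜ, compensatedExp lam ((t ^ (1 / α))⁻¹ * u) * (m u : ℂ) := by
  rw [psiT_eq_integral_compensatedExp ht,
    ← integral_add_compl hs (integrable_compensatedExp_comp_mul hm hm_int lam _), mul_add,
    ← integral_indicator hs, ← mul_integral_compensatedExp_eq_integral_rescaledDensity ht]
  congr 3 with u
  by_cases hu : u ∈ s <;> simp [hu]

theorem statement0_general (α Cp Cm : ℝ) (hα : α ∈ Set.Ioo (0 : ℝ) 2)
    (m : ℝ → ℝ) (hm_meas : Measurable m)
    (hm_int : Integrable (fun u => min 1 (u ^ 2) * m u))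
    (hlimp : Tendsto (fun u => u ^ (α + 1) * m u) (𝓝[>] (0 : ℝ)) (𝓝 Cp))
    (hlimm : Tendsto (fun u => |u| ^ (α + 1) * m u) (𝓝[<] (0 : ℝ)) (𝓝 Cm))
    (lam : ℝ) :
    Tendsto (fun t => psiT m α t lam) (𝓝[>] (0 : ℝ)) (𝓝 (psiLimit α Cp Cm lam)) := by
  have hlimp' : Tendsto (fun u => |u| ^ (α + 1) * m u) (𝓝[>] 0) (𝓝 Cp) :=
    hlimp.congr' (eventually_nhdsWithin_of_forall fun u (hu : 0 < u) => by
      simp only [abs_of_pos hu])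
  obtain ⟨δ, hδ, hbound⟩ := exists_abs_le_of_tendsto_nhdsGT_nhdsLT hlimp' hlimm
  set s := Metric.ball (0 : ℝ) δ
  have hK : ∀ w ≠ 0, |w| ^ (α + 1) * |s.indicator m w| ≤ |Cp| + |Cm| + 1 := by
    intro w hw
    by_cases hws : w ∈ s
    · simpa [indicator_of_mem hws, abs_mul, abs_of_nonneg (Real.rpow_nonneg (abs_nonneg w) _)]
        using hbound w hws hw
    · rw [indicator_of_notMem hws, abs_zero, mul_zero]; positivity
  have hloc : (fun u => |u| ^ (α + 1) * m u) =ᶠ[𝓝 0]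
      fun u => |u| ^ (α + 1) * s.indicator m u :=
    eventually_of_mem (Metric.ball_mem_nhds 0 hδ) fun u hu => by
      dsimp only; rw [indicator_of_mem (show u ∈ s from hu)]
  have hcore := tendsto_integral_compensatedExp_mul_rescaledDensity hα
    (hm_meas.indicator measurableSet_ball) hK
    (hlimp'.congr' (hloc.filter_mono nhdsWithin_le_nhds))
    (hlimm.congr' (hloc.filter_mono nhdsWithin_le_nhds)) lam
  have htail := (tendsto_mul_setIntegral_compensatedExp
    (integrableOn_compl_ball hm_meas hm_int hδ) lam fun t => (t ^ (1 / α))⁻¹).mono_left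
    (nhdsWithin_le_nhds (s := Ioi 0))
  rw [← add_zero (psiLimit α Cp Cm lam)]
  exact (hcore.add htail).congr' (eventually_nhdsWithin_of_forall fun t ht =>
    (psiT_eq_integral_rescaledDensity_add ht hm_meas hm_int measurableSet_ball lam).symm)

/-- Under condition H1, for every `λ ∈ ℝ`, `ψ_{α,t}(λ) → ψ_{α,C±}(λ)` as `t → 0+`. -/
theorem statement0 (α Cp Cm : ℝ) (hα : α ∈ Set.Ioo (0 : ℝ) 2)
    (hCp0 : 0 ≤ Cp) (hCm0 : 0 ≤ Cm) (hC : 0 < Cp + Cm)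
    (m : ℝ → ℝ) (hm_meas : Measurable m) (hm_nonneg : ∀ u, 0 ≤ m u)
    (hm_int : Integrable (fun u => min 1 (u ^ 2) * m u))
    (hlimp : Tendsto (fun u => u ^ (α + 1) * m u) (𝓝[>] (0 : ℝ)) (𝓝 Cp))
    (hlimm : Tendsto (fun u => |u| ^ (α + 1) * m u) (𝓝[<] (0 : ℝ)) (𝓝 Cm))
    (lam : ℝ) :
    Tendsto (fun t => psiT m α t lam) (𝓝[>] (0 : ℝ)) (𝓝 (psiLimit α Cp Cm lam)) :=
  statement0_general α Cp Cm hα m hm_meas hm_int hlimp hlimm lam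
end

section
/- Let I be an index set and for each i ∈ I let X_i be a nonnegative random variable (on some probability space P_i). Suppose there are constants α > 0, C > 0 and ε₀ ∈ (0,1) such that P_i(X_i < ε²) ≤ exp(−C ε^{−α}) for all i ∈ I and all ε ∈ (0, ε₀]. Then for every p ≥ 1, sup_{i∈I} E[X_i^{−p}] < ∞. -/
open MeasureTheory Real Filter Set Topology ENNReal

private lemma aux_t_tendsto {α ε₀ : ℝ} (hα : 0 < α) (hε₀ : 0 < ε₀) :
    Tendsto (fun n : ℕ => (ε₀ * (1/2:ℝ)^n) ^ (-α)) atTop atTop := by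
  have hkey : ∀ n : ℕ, (ε₀ * (1/2:ℝ)^n) ^ (-α) = ε₀ ^ (-α) * ((2:ℝ)^α) ^ n := by
    intro n
    rw [Real.mul_rpow hε₀.le (by positivity)]
    congr 1
    have h1 : ((1/2:ℝ)^n : ℝ) = (2:ℝ) ^ (-(n:ℝ)) := by
      rw [Real.rpow_neg (by norm_num), Real.rpow_natCast]
      simp [one_div, inv_pow]
    rw [h1, ← Real.rpow_mul (by norm_num), ← Real.rpow_natCast ((2:ℝ)^α) n,
      ← Real.rpow_mul (by norm_num)]
    ring_nf
  have h2 : (1:ℝ) < (2:ℝ)^α :=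
    (Real.one_lt_rpow_iff_of_pos (by norm_num)).mpr (Or.inl ⟨one_lt_two, hα⟩)
  exact Tendsto.congr (fun n => (hkey n).symm)
    ((tendsto_pow_atTop_atTop_of_one_lt h2).const_mul_atTop
      (Real.rpow_pos_of_pos hε₀ (-α)))

private lemma aux_exp_tendsto {α c ε₀ : ℝ} (hα : 0 < α) (hc : 0 < c) (hε₀ : 0 < ε₀) :
    Tendsto (fun n : ℕ => Real.exp (-c * (ε₀ * (1/2:ℝ)^n) ^ (-α))) atTop (𝓝 0) := by
  apply Real.tendsto_exp_atBot.comp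
  exact (aux_t_tendsto hα hε₀).const_mul_atTop_of_neg (by linarith)

private noncomputable def auxTerm (α C ε₀ p : ℝ) (n : ℕ) : ℝ :=
  ((ε₀ * (1/2:ℝ)^(n+1)) ^ 2) ^ (-p) * Real.exp (-C * (ε₀ * (1/2:ℝ)^n) ^ (-α))

private lemma aux_summable {α C ε₀ p : ℝ} (hα : 0 < α) (hC : 0 < C) (hε₀ : 0 < ε₀) :
    Summable (auxTerm α C ε₀ p) := by
  have hupos : ∀ n, 0 < auxTerm α C ε₀ p n := fun n =>
    mul_pos (Real.rpow_pos_of_pos (by positivity) _) (Real.exp_pos _)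
  have h2α : (1:ℝ) < (2:ℝ)^α :=
    (Real.one_lt_rpow_iff_of_pos (by norm_num)).mpr (Or.inl ⟨one_lt_two, hα⟩)
  have hc : 0 < C * ((2:ℝ)^α - 1) := mul_pos hC (by linarith)
  have hrec : ∀ n, auxTerm α C ε₀ p (n+1) =
      ((4:ℝ)^p * Real.exp (-(C * ((2:ℝ)^α - 1)) * (ε₀ * (1/2:ℝ)^n) ^ (-α))) *
        auxTerm α C ε₀ p n := by
    intro n
    have hε : (0:ℝ) < ε₀ * (1/2:ℝ)^n := by positivity
    have e1 : ε₀ * (1/2:ℝ)^(n+1+1) = (ε₀ * (1/2:ℝ)^(n+1)) * (1/2) := by ring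
    have e2 : ε₀ * (1/2:ℝ)^(n+1) = (ε₀ * (1/2:ℝ)^n) * (1/2) := by ring
    have h4 : ((ε₀ * (1/2:ℝ)^(n+1+1))^2) ^ (-p)
        = (4:ℝ)^p * ((ε₀ * (1/2:ℝ)^(n+1))^2) ^ (-p) := by
      rw [e1, mul_pow, Real.mul_rpow (by positivity) (by norm_num),
        show ((1/2:ℝ)^2) = (4:ℝ)⁻¹ by norm_num, Real.inv_rpow (by norm_num),
        ← Real.rpow_neg (by norm_num), neg_neg]
      ring
    have h2 : (ε₀ * (1/2:ℝ)^(n+1)) ^ (-α) = (2:ℝ)^α * (ε₀ * (1/2:ℝ)^n) ^ (-α) := by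
      rw [e2, Real.mul_rpow hε.le (by norm_num), show ((1/2:ℝ)) = (2:ℝ)⁻¹ by norm_num,
        Real.inv_rpow (by norm_num), ← Real.rpow_neg (by norm_num), neg_neg]
      ring
    simp only [auxTerm]
    rw [h4, h2,
      show -C * ((2:ℝ)^α * (ε₀ * (1/2:ℝ)^n) ^ (-α))
        = (-(C * ((2:ℝ)^α - 1)) * (ε₀ * (1/2:ℝ)^n) ^ (-α))
          + (-C * (ε₀ * (1/2:ℝ)^n) ^ (-α)) by ring,
      Real.exp_add]
    ring
  apply summable_of_ratio_norm_eventually_le (r := 1/2) (by norm_num)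
  have hexp : Tendsto (fun n : ℕ =>
      (4:ℝ)^p * Real.exp (-(C * ((2:ℝ)^α - 1)) * (ε₀ * (1/2:ℝ)^n) ^ (-α))) atTop (𝓝 0) := by
    simpa using (aux_exp_tendsto hα hc hε₀).const_mul ((4:ℝ)^p)
  filter_upwards [hexp.eventually_le_const (by norm_num : (0:ℝ) < 1/2)] with n hn
  rw [Real.norm_of_nonneg (hupos _).le, Real.norm_of_nonneg (hupos _).le, hrec n]
  exact mul_le_mul_of_nonneg_right hn (hupos n).le

private noncomputable def auxBound (α C ε₀ p : ℝ) : ℕ → ℝ≥0∞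
  | 0 => ENNReal.ofReal ((ε₀^2) ^ (-p))
  | (m+1) => ENNReal.ofReal (auxTerm α C ε₀ p m)

private def sset {Ωi : Type*} (X : Ωi → ℝ) (ε₀ : ℝ) : ℕ → Set Ωi
  | 0 => {ω | ε₀^2 ≤ X ω}
  | (m+1) => {ω | (ε₀ * (1/2:ℝ)^(m+1))^2 ≤ X ω ∧ X ω < (ε₀ * (1/2:ℝ)^m)^2}

/-- If nonnegative random variables `X i` on probability spaces `(Ω i, P i)` satisfy the
uniform small-ball bound `P i (X i < ε²) ≤ exp (-C ε^{-α})` for all small `ε`, then their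
negative moments `E[X_i^{-p}]` are uniformly bounded for every `p ≥ 1` (with `0^{-p} = ∞`). -/
theorem statement6 {I : Type*} (Ω : I → Type*) [∀ i, MeasurableSpace (Ω i)]
    (P : ∀ i, Measure (Ω i)) [∀ i, IsProbabilityMeasure (P i)]
    (X : ∀ i, Ω i → ℝ) (hX_meas : ∀ i, Measurable (X i)) (hX_nonneg : ∀ i ω, 0 ≤ X i ω)
    (α C ε₀ : ℝ) (hα : 0 < α) (hC : 0 < C) (hε₀ : ε₀ ∈ Set.Ioo (0 : ℝ) 1)
    (hsmall : ∀ i, ∀ ε ∈ Set.Ioc (0 : ℝ) ε₀,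
      P i {ω | X i ω < ε ^ 2} ≤ ENNReal.ofReal (Real.exp (-C * ε ^ (-α))))
    (p : ℝ) (hp : 1 ≤ p) :
    ⨆ i, ∫⁻ ω, (ENNReal.ofReal (X i ω)) ^ (-p) ∂(P i) < ⊤ := by
  obtain ⟨hε₀pos, hε₀lt⟩ := hε₀
  have hepos : ∀ n : ℕ, (0:ℝ) < ε₀ * (1/2:ℝ)^n := fun n => by positivity
  have hele : ∀ n : ℕ, ε₀ * (1/2:ℝ)^n ≤ ε₀ := fun n =>
    mul_le_of_le_one_right hε₀pos.le (by
      exact pow_le_one₀ (by norm_num) (by norm_num))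
  have hpnp : -p ≤ 0 := by linarith
  have hBlt : ∑' n, auxBound α C ε₀ p n < ⊤ := by
    rw [tsum_eq_zero_add' ENNReal.summable]
    simp only [auxBound]
    rw [← ENNReal.ofReal_tsum_of_nonneg (fun n => by
        exact mul_nonneg (Real.rpow_nonneg (by positivity) _) (Real.exp_pos _).le)
      (aux_summable hα hC hε₀pos)]
    exact ENNReal.add_lt_top.mpr ⟨ENNReal.ofReal_lt_top, ENNReal.ofReal_lt_top⟩
  refine lt_of_le_of_lt (iSup_le fun i => ?_) hBlt
  -- Z : zero set has measure zero
  have hZ : P i {ω | X i ω = 0} = 0 := by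
    have hle : ∀ n : ℕ, P i {ω | X i ω = 0}
        ≤ ENNReal.ofReal (Real.exp (-C * (ε₀ * (1/2:ℝ)^n) ^ (-α))) := by
      intro n
      refine le_trans (measure_mono ?_) (hsmall i _ ⟨hepos n, hele n⟩)
      intro ω hω
      simp only [mem_setOf_eq] at hω ⊢
      rw [hω]
      positivity
    have htend : Tendsto (fun n : ℕ =>
        ENNReal.ofReal (Real.exp (-C * (ε₀ * (1/2:ℝ)^n) ^ (-α)))) atTop (𝓝 0) := by
      rw [← ENNReal.ofReal_zero]
      exact (ENNReal.continuous_ofReal.tendsto 0).comp (aux_exp_tendsto hα hC hε₀pos)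
    exact le_zero_iff.mp (ge_of_tendsto' htend hle)
  have hcover : {ω | X i ω = 0} ∪ ⋃ n, sset (X i) ε₀ n = univ := by
    refine eq_univ_of_forall fun ω => ?_
    rcases eq_or_lt_of_le (hX_nonneg i ω) with h0 | hpos
    · exact Or.inl h0.symm
    right
    have hex : ∃ n : ℕ, (ε₀ * (1/2:ℝ)^n)^2 ≤ X i ω := by
      have htend : Tendsto (fun n : ℕ => (ε₀ * (1/2:ℝ)^n)^2) atTop (𝓝 0) := by
        have h1 : Tendsto (fun n : ℕ => ε₀ * (1/2:ℝ)^n) atTop (𝓝 0) := by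
          simpa using
            (tendsto_pow_atTop_nhds_zero_of_lt_one (r := (1/2:ℝ)) (by norm_num) (by norm_num)).const_mul ε₀
        simpa using h1.pow 2
      obtain ⟨n, hn⟩ := (htend.eventually_lt_const hpos).exists
      exact ⟨n, hn.le⟩
    by_cases h0 : ε₀^2 ≤ X i ω
    · exact mem_iUnion.mpr ⟨0, h0⟩
    · have hex0 : Nat.find hex ≠ 0 := by
        intro h
        have := Nat.find_spec hex
        rw [h] at this
        simp only [pow_zero, mul_one] at this
        exact h0 this
      obtain ⟨m, hm⟩ := Nat.exists_eq_succ_of_ne_zero hex0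
      refine mem_iUnion.mpr ⟨m+1, ⟨?_, ?_⟩⟩
      · have := Nat.find_spec hex
        rwa [hm] at this
      · exact not_le.mp (Nat.find_min hex (by omega))
  have hbound : ∀ n : ℕ, ∫⁻ ω in sset (X i) ε₀ n, (ENNReal.ofReal (X i ω)) ^ (-p) ∂(P i)
      ≤ auxBound α C ε₀ p n := by
    intro n
    have hpt : ∀ (a : ℝ), 0 < a → ∀ ω, a^2 ≤ X i ω →
        (ENNReal.ofReal (X i ω)) ^ (-p) ≤ ENNReal.ofReal ((a^2) ^ (-p)) := by
      intro a ha ω hω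
      have hXpos : 0 < X i ω := lt_of_lt_of_le (by positivity) hω
      rw [ENNReal.ofReal_rpow_of_pos hXpos]
      exact ENNReal.ofReal_le_ofReal
        (Real.rpow_le_rpow_of_nonpos (by positivity) hω hpnp)
    match n with
    | 0 =>
      calc ∫⁻ ω in sset (X i) ε₀ 0, (ENNReal.ofReal (X i ω)) ^ (-p) ∂(P i)
          ≤ ∫⁻ _ in sset (X i) ε₀ 0, ENNReal.ofReal ((ε₀^2) ^ (-p)) ∂(P i) :=
            setLIntegral_mono measurable_const (fun ω hω => hpt ε₀ hε₀pos ω hω)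
        _ = ENNReal.ofReal ((ε₀^2) ^ (-p)) * P i (sset (X i) ε₀ 0) :=
            setLIntegral_const _ _
        _ ≤ ENNReal.ofReal ((ε₀^2) ^ (-p)) * 1 := mul_le_mul_right prob_le_one _
        _ = auxBound α C ε₀ p 0 := by rw [mul_one]; rfl
    | (m+1) =>
      have hμ : P i (sset (X i) ε₀ (m+1))
          ≤ ENNReal.ofReal (Real.exp (-C * (ε₀ * (1/2:ℝ)^m) ^ (-α))) := by
        refine le_trans (measure_mono fun ω hω => hω.2) (hsmall i _ ⟨hepos m, hele m⟩)
      calc ∫⁻ ω in sset (X i) ε₀ (m+1), (ENNReal.ofReal (X i ω)) ^ (-p) ∂(P i)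
          ≤ ∫⁻ _ in sset (X i) ε₀ (m+1),
              ENNReal.ofReal (((ε₀ * (1/2:ℝ)^(m+1))^2) ^ (-p)) ∂(P i) :=
            setLIntegral_mono measurable_const
              (fun ω hω => hpt _ (hepos (m+1)) ω hω.1)
        _ = ENNReal.ofReal (((ε₀ * (1/2:ℝ)^(m+1))^2) ^ (-p)) * P i (sset (X i) ε₀ (m+1)) :=
            setLIntegral_const _ _
        _ ≤ ENNReal.ofReal (((ε₀ * (1/2:ℝ)^(m+1))^2) ^ (-p)) *
              ENNReal.ofReal (Real.exp (-C * (ε₀ * (1/2:ℝ)^m) ^ (-α))) :=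
            mul_le_mul_right hμ _
        _ = auxBound α C ε₀ p (m+1) := by
            rw [← ENNReal.ofReal_mul (Real.rpow_nonneg (by positivity) _)]
            rfl
  calc ∫⁻ ω, (ENNReal.ofReal (X i ω)) ^ (-p) ∂(P i)
      = ∫⁻ ω in {ω | X i ω = 0} ∪ ⋃ n, sset (X i) ε₀ n,
          (ENNReal.ofReal (X i ω)) ^ (-p) ∂(P i) := by
        rw [hcover, setLIntegral_univ]
    _ ≤ (∫⁻ ω in {ω | X i ω = 0}, (ENNReal.ofReal (X i ω)) ^ (-p) ∂(P i))
        + ∫⁻ ω in ⋃ n, sset (X i) ε₀ n, (ENNReal.ofReal (X i ω)) ^ (-p) ∂(P i) :=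
        lintegral_union_le _ _ _
    _ = ∫⁻ ω in ⋃ n, sset (X i) ε₀ n, (ENNReal.ofReal (X i ω)) ^ (-p) ∂(P i) := by
        rw [setLIntegral_measure_zero _ _ hZ, zero_add]
    _ ≤ ∑' n, ∫⁻ ω in sset (X i) ε₀ n, (ENNReal.ofReal (X i ω)) ^ (-p) ∂(P i) :=
        lintegral_iUnion_le _ _
    _ ≤ ∑' n, auxBound α C ε₀ p n := ENNReal.tsum_le_tsum hbound
end

section
/- Under condition H1, there exist constants C > 0 and ε₀ ∈ (0,1) such that for all t ∈ (0,1] and all ε ∈ (0, ε₀], t ∫_{{u : ε t^{1/α} ≤ |u| ≤ t^{1/α}}} m(u) du ≥ C ε^{−α}. -/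
open MeasureTheory Real Filter Set Topology

/-- Integrability of `m` on any measurable set bounded away from `0`. -/
lemma int_aux7 (m : ℝ → ℝ) (hm_meas : Measurable m) (hm_nonneg : ∀ u, 0 ≤ m u)
    (hm_int : Integrable (fun u => min 1 (u ^ 2) * m u)) (a : ℝ) (ha : 0 < a)
    (S : Set ℝ) (hS : MeasurableSet S) (hSsub : ∀ u ∈ S, a ≤ |u|) :
    IntegrableOn m S := by
  have hc : (0 : ℝ) < min 1 (a ^ 2) := lt_min one_pos (by positivity)
  apply Integrable.mono' ((hm_int.integrableOn (s := S)).const_mul (min 1 (a ^ 2))⁻¹)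
    hm_meas.aestronglyMeasurable.restrict
  filter_upwards [ae_restrict_mem hS] with u hu
  have habs := hSsub u hu
  have hd : min 1 (a ^ 2) ≤ min 1 (u ^ 2) := by
    refine min_le_min le_rfl ?_
    have : a ^ 2 ≤ |u| ^ 2 := by nlinarith [abs_nonneg u]
    simpa [sq_abs] using this
  rw [Real.norm_eq_abs, abs_of_nonneg (hm_nonneg u),
    show (min 1 (a ^ 2))⁻¹ * (min 1 (u ^ 2) * m u) = (min 1 (u ^ 2) / min 1 (a ^ 2)) * m u by ring]
  nlinarith [mul_le_mul_of_nonneg_right ((one_le_div hc).mpr hd) (hm_nonneg u)]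

/-- Main quantitative estimate, abstracted over the lower-bounding function `g`. -/
lemma aux_main7 (α : ℝ) (hα : 0 < α) (L δ : ℝ) (hL : 0 < L) (hδ : 0 < δ) (hδ1 : δ ≤ 1)
    (m g : ℝ → ℝ)
    (hg_int : ∀ a b : ℝ, 0 < a → IntegrableOn g (Set.Ioc a b))
    (hg : ∀ u ∈ Set.Ioc (0 : ℝ) δ, L ≤ u ^ (α + 1) * g u)
    (hcomp : ∀ a b r : ℝ, 0 < a → a ≤ b → b ≤ r →
      (∫ u in Set.Ioc a b, g u) ≤ ∫ u in {u : ℝ | a ≤ |u| ∧ |u| ≤ r}, m u) :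
    ∃ C > (0 : ℝ), ∃ ε₀ ∈ Set.Ioo (0 : ℝ) 1, ∀ t ∈ Set.Ioc (0 : ℝ) 1, ∀ ε ∈ Set.Ioc (0 : ℝ) ε₀,
      C * ε ^ (-α) ≤ t * ∫ u in {u : ℝ | ε * t ^ (1 / α) ≤ |u| ∧ |u| ≤ t ^ (1 / α)}, m u := by
  have hαne : α ≠ 0 := ne_of_gt hα
  set K : ℝ := 2 * (δ ^ (-α) + 1) with hK
  have hδα : (0 : ℝ) ≤ δ ^ (-α) := Real.rpow_nonneg hδ.le _
  have hK0 : (0 : ℝ) < K := by positivity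
  set ε₁ : ℝ := K ^ (-(1 / α)) with hε₁def
  have hε₁0 : (0 : ℝ) < ε₁ := Real.rpow_pos_of_pos hK0 _
  refine ⟨L / (2 * α), by positivity, min (δ / 2) ε₁, ⟨by positivity, ?_⟩, ?_⟩
  · calc min (δ / 2) ε₁ ≤ δ / 2 := min_le_left _ _
      _ < 1 := by linarith
  intro t ht ε hε
  obtain ⟨ht0, ht1⟩ := ht
  obtain ⟨hε0, hεε₀⟩ := hε
  have hεδ2 : ε ≤ δ / 2 := hεε₀.trans (min_le_left _ _)
  have hεε₁ : ε ≤ ε₁ := hεε₀.trans (min_le_right _ _)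
  set r : ℝ := t ^ (1 / α) with hrdef
  have hr0 : (0 : ℝ) < r := Real.rpow_pos_of_pos ht0 _
  have hr1 : r ≤ 1 := Real.rpow_le_one ht0.le ht1 (by positivity)
  set a : ℝ := ε * r with hadef
  set b : ℝ := min δ r with hbdef
  have ha0 : (0 : ℝ) < a := mul_pos hε0 hr0
  have hab : a ≤ b := by
    refine le_min ?_ ?_
    · nlinarith
    · nlinarith
  have hbr : b ≤ r := min_le_right _ _
  -- pointwise lower bound on `g`
  have hpt : ∀ u ∈ Set.Ioc a b, L * u ^ (-(α + 1)) ≤ g u := by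
    intro u hu
    have hu0 : 0 < u := ha0.trans hu.1
    have huδ : u ≤ δ := hu.2.trans (min_le_left _ _)
    have h1 := hg u ⟨hu0, huδ⟩
    have hkey : u ^ (-(α + 1)) * (u ^ (α + 1) * g u) = g u := by
      rw [← mul_assoc, ← Real.rpow_add hu0, show -(α + 1) + (α + 1) = 0 by ring,
        Real.rpow_zero, one_mul]
    calc L * u ^ (-(α + 1)) = u ^ (-(α + 1)) * L := mul_comm _ _
      _ ≤ u ^ (-(α + 1)) * (u ^ (α + 1) * g u) :=
          mul_le_mul_of_nonneg_left h1 (Real.rpow_pos_of_pos hu0 _).le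
      _ = g u := hkey
  -- integrability of the power function
  have hint_pow : IntegrableOn (fun u : ℝ => L * u ^ (-(α + 1))) (Set.Ioc a b) := by
    have hcont : ContinuousOn (fun u : ℝ => L * u ^ (-(α + 1))) (Set.Icc a b) :=
      continuousOn_const.mul (continuousOn_id.rpow_const
        (fun x hx => Or.inl (ne_of_gt (lt_of_lt_of_le ha0 hx.1))))
    exact (hcont.integrableOn_Icc).mono_set Set.Ioc_subset_Icc_self
  have hmono : (∫ u in Set.Ioc a b, L * u ^ (-(α + 1))) ≤ ∫ u in Set.Ioc a b, g u :=
    setIntegral_mono_on hint_pow (hg_int a b ha0) measurableSet_Ioc hpt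
  -- computing the integral of the power function
  have hcalc : (∫ u in Set.Ioc a b, L * u ^ (-(α + 1)))
      = L * ((a ^ (-α) - b ^ (-α)) / α) := by
    rw [MeasureTheory.integral_const_mul, ← intervalIntegral.integral_of_le hab,
      integral_rpow (Or.inr ⟨by intro h; apply hαne; linarith [neg_eq_iff_eq_neg.mp h],
        by rw [Set.uIcc_of_le hab]; exact fun h => absurd h.1 (not_le.mpr ha0)⟩)]
    rw [show -(α + 1) + 1 = -α by ring, div_neg, ← neg_div, neg_sub]
  -- key rpow identities
  have hrinv : r ^ (-α) = t⁻¹ := by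
    rw [hrdef, ← Real.rpow_mul ht0.le, show (1 / α) * (-α) = -1 by field_simp,
      Real.rpow_neg_one]
  have hta : t * a ^ (-α) = ε ^ (-α) := by
    rw [hadef, Real.mul_rpow hε0.le hr0.le, hrinv]
    field_simp
  have htb : t * b ^ (-α) ≤ δ ^ (-α) + 1 := by
    rcases min_cases δ r with ⟨h1, _⟩ | ⟨h1, _⟩
    · rw [hbdef, h1]; nlinarith
    · rw [hbdef, h1, hrinv]
      rw [mul_inv_cancel₀ (ne_of_gt ht0)]
      linarith
  have hεK : K ≤ ε ^ (-α) := by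
    have h2 : ε₁ ^ (-α) = K := by
      rw [hε₁def, ← Real.rpow_mul hK0.le, show (-(1 / α)) * (-α) = 1 by field_simp,
        Real.rpow_one]
    calc K = ε₁ ^ (-α) := h2.symm
      _ ≤ ε ^ (-α) := Real.rpow_le_rpow_of_nonpos hε0 hεε₁ (by linarith)
  have hεpos : (0 : ℝ) < ε ^ (-α) := Real.rpow_pos_of_pos hε0 _
  -- put everything together
  have hfinal : L / (2 * α) * ε ^ (-α) ≤ t * (L * ((a ^ (-α) - b ^ (-α)) / α)) := by
    rw [show t * (L * ((a ^ (-α) - b ^ (-α)) / α))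
        = (L / α) * (t * a ^ (-α) - t * b ^ (-α)) by ring, hta]
    have h3 : ε ^ (-α) / 2 ≤ ε ^ (-α) - t * b ^ (-α) := by
      rw [hK] at hεK; linarith
    calc L / (2 * α) * ε ^ (-α) = (L / α) * (ε ^ (-α) / 2) := by field_simp
      _ ≤ (L / α) * (ε ^ (-α) - t * b ^ (-α)) :=
          mul_le_mul_of_nonneg_left h3 (by positivity)
  have hcmp := hcomp a b r ha0 hab hbr
  calc L / (2 * α) * ε ^ (-α) ≤ t * (L * ((a ^ (-α) - b ^ (-α)) / α)) := hfinal
    _ = t * ∫ u in Set.Ioc a b, L * u ^ (-(α + 1)) := by rw [hcalc]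
    _ ≤ t * ∫ u in {u : ℝ | a ≤ |u| ∧ |u| ≤ r}, m u := by
        apply mul_le_mul_of_nonneg_left (hmono.trans hcmp) ht0.le

/-- Under condition H1, there exist `C > 0` and `ε₀ ∈ (0,1)` such that for all `t ∈ (0,1]`
and `ε ∈ (0, ε₀]`, `t ∫_{ε t^{1/α} ≤ |u| ≤ t^{1/α}} m(u) du ≥ C ε^{-α}`. -/
theorem statement7 (α Cp Cm : ℝ) (hα : α ∈ Set.Ioo (0 : ℝ) 2)
    (hCp0 : 0 ≤ Cp) (hCm0 : 0 ≤ Cm) (hC : 0 < Cp + Cm)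
    (m : ℝ → ℝ) (hm_meas : Measurable m) (hm_nonneg : ∀ u, 0 ≤ m u)
    (hm_int : Integrable (fun u => min 1 (u ^ 2) * m u))
    (hlimp : Tendsto (fun u => u ^ (α + 1) * m u) (𝓝[>] (0 : ℝ)) (𝓝 Cp))
    (hlimm : Tendsto (fun u => |u| ^ (α + 1) * m u) (𝓝[<] (0 : ℝ)) (𝓝 Cm)) :
    ∃ C > (0 : ℝ), ∃ ε₀ ∈ Set.Ioo (0 : ℝ) 1, ∀ t ∈ Set.Ioc (0 : ℝ) 1, ∀ ε ∈ Set.Ioc (0 : ℝ) ε₀,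
      C * ε ^ (-α) ≤ t * ∫ u in {u : ℝ | ε * t ^ (1 / α) ≤ |u| ∧ |u| ≤ t ^ (1 / α)}, m u := by
  obtain ⟨hα0, hα2⟩ := hα
  -- measurability of the target sets
  have hSmeas : ∀ a r : ℝ, MeasurableSet {u : ℝ | a ≤ |u| ∧ |u| ≤ r} := by
    intro a r
    exact ((isClosed_le continuous_const continuous_abs).measurableSet).inter
      ((isClosed_le continuous_abs continuous_const).measurableSet)
  rcases lt_or_ge 0 Cp with hCp | hCple
  · -- Cp > 0 : use the positive side
    have hev : ∀ᶠ u in 𝓝[>] (0 : ℝ), Cp / 2 < u ^ (α + 1) * m u :=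
      hlimp.eventually_const_lt (by linarith)
    rw [eventually_nhdsWithin_iff, Metric.eventually_nhds_iff] at hev
    obtain ⟨δ₀, hδ₀0, hδ₀⟩ := hev
    set δ : ℝ := min (δ₀ / 2) 1 with hδdef
    have hδ0 : 0 < δ := lt_min (by linarith) one_pos
    have hδ1 : δ ≤ 1 := min_le_right _ _
    have hg : ∀ u ∈ Set.Ioc (0 : ℝ) δ, Cp / 2 ≤ u ^ (α + 1) * m u := by
      intro u hu
      refine (hδ₀ ?_ ?_).le
      · show dist u 0 < δ₀
        rw [Real.dist_eq, sub_zero, abs_of_pos hu.1]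
        have := hu.2.trans (min_le_left _ _); linarith
      · exact hu.1
    refine aux_main7 α hα0 (Cp / 2) δ (by linarith) hδ0 hδ1 m m ?_ hg ?_
    · intro a b ha
      exact int_aux7 m hm_meas hm_nonneg hm_int a ha _ measurableSet_Ioc
        (fun u hu => by rw [abs_of_pos (ha.trans hu.1)]; exact hu.1.le)
    · intro a b r ha hab hbr
      refine setIntegral_mono_set
        (int_aux7 m hm_meas hm_nonneg hm_int a ha _ (hSmeas a r) (fun u hu => hu.1)) ?_ ?_
      · exact Filter.Eventually.of_forall fun u => hm_nonneg u
      · refine HasSubset.Subset.eventuallyLE ?_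
        intro u hu
        have hu0 : 0 < u := ha.trans hu.1
        rw [Set.mem_setOf_eq, abs_of_pos hu0]
        exact ⟨hu.1.le, hu.2.trans hbr⟩
  · -- Cp ≤ 0, so Cp = 0 and Cm > 0 : use the negative side
    have hCm : 0 < Cm := by
      have : Cp = 0 := le_antisymm hCple hCp0
      linarith
    have hneg : Tendsto (fun u : ℝ => -u) (𝓝[>] (0 : ℝ)) (𝓝[<] (0 : ℝ)) := by
      rw [tendsto_nhdsWithin_iff]
      constructor
      · have : Tendsto (fun u : ℝ => -u) (𝓝 (0 : ℝ)) (𝓝 (-(0 : ℝ))) :=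
          (continuous_neg.tendsto 0)
        simpa using this.mono_left nhdsWithin_le_nhds
      · exact eventually_mem_nhdsWithin.mono fun u hu => by
          simp only [Set.mem_Iio, neg_lt_zero]; exact hu
    have hlim' : Tendsto (fun u : ℝ => u ^ (α + 1) * m (-u)) (𝓝[>] (0 : ℝ)) (𝓝 Cm) := by
      refine (hlimm.comp hneg).congr' ?_
      exact eventually_mem_nhdsWithin.mono fun u hu => by
        simp [Function.comp, abs_of_pos (Set.mem_Ioi.mp hu)]
    have hev : ∀ᶠ u in 𝓝[>] (0 : ℝ), Cm / 2 < u ^ (α + 1) * m (-u) :=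
      hlim'.eventually_const_lt (by linarith)
    rw [eventually_nhdsWithin_iff, Metric.eventually_nhds_iff] at hev
    obtain ⟨δ₀, hδ₀0, hδ₀⟩ := hev
    set δ : ℝ := min (δ₀ / 2) 1 with hδdef
    have hδ0 : 0 < δ := lt_min (by linarith) one_pos
    have hδ1 : δ ≤ 1 := min_le_right _ _
    have hg : ∀ u ∈ Set.Ioc (0 : ℝ) δ, Cm / 2 ≤ u ^ (α + 1) * m (-u) := by
      intro u hu
      refine (hδ₀ ?_ ?_).le
      · show dist u 0 < δ₀
        rw [Real.dist_eq, sub_zero, abs_of_pos hu.1]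
        have := hu.2.trans (min_le_left _ _); linarith
      · exact hu.1
    have hmneg_int : Integrable (fun u : ℝ => min 1 (u ^ 2) * m (-u)) := by
      have := hm_int.comp_neg
      simpa using this
    refine aux_main7 α hα0 (Cm / 2) δ (by linarith) hδ0 hδ1 m (fun u => m (-u)) ?_ hg ?_
    · intro a b ha
      exact int_aux7 (fun u => m (-u)) (hm_meas.comp measurable_neg)
        (fun u => hm_nonneg _) hmneg_int a ha _ measurableSet_Ioc
        (fun u hu => by rw [abs_of_pos (ha.trans hu.1)]; exact hu.1.le)
    · intro a b r ha hab hbr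
      have hstep : (∫ u in Set.Ioc a b, m (-u)) = ∫ u in Set.Ioc (-b) (-a), m u := by
        rw [← intervalIntegral.integral_of_le hab, intervalIntegral.integral_comp_neg,
          intervalIntegral.integral_of_le (by linarith : -b ≤ -a)]
      rw [hstep]
      refine setIntegral_mono_set
        (int_aux7 m hm_meas hm_nonneg hm_int a ha _ (hSmeas a r) (fun u hu => hu.1)) ?_ ?_
      · exact Filter.Eventually.of_forall fun u => hm_nonneg u
      · refine HasSubset.Subset.eventuallyLE ?_
        intro u hu
        have hu0 : u < 0 := lt_of_le_of_lt hu.2 (by linarith)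
        rw [Set.mem_setOf_eq, abs_of_neg hu0]
        constructor
        · linarith [hu.2]
        · linarith [hu.1, hbr]
end

section
/- Under condition H1, sup_{t∈(0,1]} t^{1−2/α} ∫_{{u : |u| ≤ t^{1/α}}} u² m(u) du < ∞. -/
/-!
Write `r = t ^ (1 / α)`, so that the weight is `t ^ (1 - 2 / α) = r ^ (α - 2)`. Near the origin the
two limits bound `|u| ^ (α + 1) * m u` by a constant `K`, hence `u ^ 2 * m u ≤ K * |u| ^ (1 - α)`
and `∫_{|u| ≤ r} u ^ 2 * m u ≤ 2K / (2 - α) * r ^ (2 - α)`, which cancels the weight exactly.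
For `r` away from the origin the weight is bounded, and for `r ≤ 1` the integral is at most
`∫ min 1 (u ^ 2) * m u`.
-/

open MeasureTheory Real Filter Set Topology

lemma measurableSet_abs_le (s : ℝ) : MeasurableSet {u : ℝ | |u| ≤ s} :=
  measurableSet_le continuous_abs.measurable measurable_const

lemma setIntegral_abs_le_abs_rpow {p s : ℝ} (hp : -1 < p) (hs : 0 ≤ s) :
    ∫ u in {u : ℝ | |u| ≤ s}, |u| ^ p = 2 * (s ^ (p + 1) / (p + 1)) := by
  have hind : {u : ℝ | |u| ≤ s}.indicator (fun u => |u| ^ p) =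
      fun u => (Iic s).indicator (· ^ p) |u| := by
    ext u; by_cases hu : |u| ≤ s <;> simp [indicator, hu]
  rw [← integral_indicator (measurableSet_abs_le s), hind, integral_comp_abs,
    integral_indicator measurableSet_Iic, Measure.restrict_restrict measurableSet_Iic,
    Iic_inter_Ioi, ← intervalIntegral.integral_of_le hs, integral_rpow (Or.inl hp),
    zero_rpow (by linarith), sub_zero]

lemma integrableOn_abs_le_abs_rpow {p s : ℝ} (hp : -1 < p) (hs : 0 < s) :
    IntegrableOn (fun u : ℝ => |u| ^ p) {u : ℝ | |u| ≤ s} := by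
  -- a non-integrable function has Bochner integral `0`, and this integral is positive
  refine Integrable.of_integral_ne_zero ?_
  rw [setIntegral_abs_le_abs_rpow hp hs.le]
  have : 0 < p + 1 := by linarith
  positivity

lemma sq_mul_eq_abs_rpow_mul {u : ℝ} (hu : u ≠ 0) (a c : ℝ) :
    u ^ 2 * c = |u| ^ (1 - a) * (|u| ^ (a + 1) * c) := by
  rw [← mul_assoc, ← rpow_add (abs_pos.2 hu), show 1 - a + (a + 1) = 2 by ring, rpow_two,
    sq_abs]


lemma setIntegral_abs_le_le_of_le_rpow {f : ℝ → ℝ} {a K s : ℝ} (ha : a < 2) (hs : 0 < s)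
    (hf : IntegrableOn f {u | |u| ≤ s}) (hbound : ∀ u, |u| ≤ s → f u ≤ K * |u| ^ (1 - a)) :
    ∫ u in {u | |u| ≤ s}, f u ≤ 2 * K / (2 - a) * s ^ (2 - a) := by
  have hp : -1 < 1 - a := by linarith
  calc ∫ u in {u | |u| ≤ s}, f u
      ≤ ∫ u in {u | |u| ≤ s}, K * |u| ^ (1 - a) :=
        setIntegral_mono_on hf ((integrableOn_abs_le_abs_rpow hp hs).const_mul K)
          (measurableSet_abs_le s) hbound
    _ = 2 * K / (2 - a) * s ^ (2 - a) := by
        rw [integral_const_mul, setIntegral_abs_le_abs_rpow hp hs.le,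
          show 1 - a + 1 = 2 - a by ring]
        ring

lemma exists_sq_mul_le_abs_rpow_of_tendsto {α Cp Cm : ℝ} {m : ℝ → ℝ}
    (hlimp : Tendsto (fun u => u ^ (α + 1) * m u) (𝓝[>] 0) (𝓝 Cp))
    (hlimm : Tendsto (fun u => |u| ^ (α + 1) * m u) (𝓝[<] 0) (𝓝 Cm)) :
    ∃ K δ, 0 < δ ∧ ∀ u, |u| ≤ δ → u ^ 2 * m u ≤ K * |u| ^ (1 - α) := by
  set K := |Cp| + |Cm| + 1
  have hlimp' : Tendsto (fun u => |u| ^ (α + 1) * m u) (𝓝[>] 0) (𝓝 Cp) :=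
    hlimp.congr' (eventually_nhdsWithin_of_forall fun u hu => by simp only [abs_of_pos (mem_Ioi.1 hu)])
  have hbound : ∀ᶠ u in 𝓝[≠] 0, |u| ^ (α + 1) * m u ≤ K := by
    rw [← nhdsLT_sup_nhdsGT, eventually_sup]
    exact ⟨hlimm.eventually_le_const (by linarith [le_abs_self Cm, abs_nonneg Cp]),
      hlimp'.eventually_le_const (by linarith [le_abs_self Cp, abs_nonneg Cm])⟩
  have hnear : ∀ᶠ u in 𝓝 0, u ^ 2 * m u ≤ K * |u| ^ (1 - α) := by
    filter_upwards [eventually_nhdsWithin_iff.1 hbound] with u hu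
    rcases eq_or_ne u 0 with rfl | hu0
    · simp only [ne_eq, OfNat.ofNat_ne_zero, not_false_eq_true, zero_pow, zero_mul]
      positivity
    · rw [sq_mul_eq_abs_rpow_mul hu0 α, mul_comm K]
      exact mul_le_mul_of_nonneg_left (hu hu0) (by positivity)
  obtain ⟨δ, hδ, hball⟩ := Metric.nhds_basis_closedBall.eventually_iff.1 hnear
  exact ⟨K, δ, hδ, fun u hu => hball (by simpa using hu)⟩

lemma min_one_sq_of_abs_le_one {u : ℝ} (hu : |u| ≤ 1) : min 1 (u ^ 2) = u ^ 2 :=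
  min_eq_right ((sq_le_one_iff_abs_le_one u).2 hu)

lemma integrableOn_sq_mul_of_integrable_min {m : ℝ → ℝ}
    (hm_int : Integrable (fun u => min 1 (u ^ 2) * m u)) {r : ℝ} (hr : r ≤ 1) :
    IntegrableOn (fun u => u ^ 2 * m u) {u | |u| ≤ r} :=
  hm_int.integrableOn.congr_fun
    (fun u hu => by simp only [min_one_sq_of_abs_le_one (le_trans hu hr)])
    (measurableSet_abs_le r)

lemma setIntegral_sq_mul_le_integral_min {m : ℝ → ℝ} (hm_nonneg : ∀ u, 0 ≤ m u)
    (hm_int : Integrable (fun u => min 1 (u ^ 2) * m u)) {r : ℝ} (hr : r ≤ 1) :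
    ∫ u in {u | |u| ≤ r}, u ^ 2 * m u ≤ ∫ u, min 1 (u ^ 2) * m u := by
  rw [setIntegral_congr_fun (g := fun u => min 1 (u ^ 2) * m u) (measurableSet_abs_le r)
    fun u hu => by simp only [min_one_sq_of_abs_le_one (le_trans hu hr)]]
  exact setIntegral_le_integral hm_int
      (Eventually.of_forall fun u => mul_nonneg (by positivity) (hm_nonneg u))

theorem exists_rpow_mul_setIntegral_sq_mul_le {α Cp Cm : ℝ} (hα : α < 2) {m : ℝ → ℝ}
    (hm_nonneg : ∀ u, 0 ≤ m u) (hm_int : Integrable (fun u => min 1 (u ^ 2) * m u))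
    (hlimp : Tendsto (fun u => u ^ (α + 1) * m u) (𝓝[>] 0) (𝓝 Cp))
    (hlimm : Tendsto (fun u => |u| ^ (α + 1) * m u) (𝓝[<] 0) (𝓝 Cm)) :
    ∃ M, ∀ r ∈ Ioc (0 : ℝ) 1, r ^ (α - 2) * ∫ u in {u | |u| ≤ r}, u ^ 2 * m u ≤ M := by
  obtain ⟨K, δ, hδ, hbound⟩ := exists_sq_mul_le_abs_rpow_of_tendsto hlimp hlimm
  set I := ∫ u, min 1 (u ^ 2) * m u
  refine ⟨max (2 * K / (2 - α)) (δ ^ (α - 2) * I), fun r ⟨hr0, hr1⟩ => ?_⟩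
  rcases le_or_gt r δ with hrδ | hδr
  · refine le_max_of_le_left ?_
    calc r ^ (α - 2) * ∫ u in {u | |u| ≤ r}, u ^ 2 * m u
        ≤ r ^ (α - 2) * (2 * K / (2 - α) * r ^ (2 - α)) := by
          gcongr
          exact setIntegral_abs_le_le_of_le_rpow hα hr0
            (integrableOn_sq_mul_of_integrable_min hm_int hr1)
            fun u hu => hbound u (hu.trans hrδ)
      _ = 2 * K / (2 - α) := by
          rw [mul_left_comm, ← rpow_add hr0, show α - 2 + (2 - α) = 0 by ring, rpow_zero,
            mul_one]
  · refine le_max_of_le_right (mul_le_mul (rpow_le_rpow_of_nonpos hδ hδr.le (by linarith))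
      (setIntegral_sq_mul_le_integral_min hm_nonneg hm_int hr1) ?_ (by positivity))
    exact setIntegral_nonneg (measurableSet_abs_le r) fun u _ =>
      mul_nonneg (sq_nonneg u) (hm_nonneg u)

theorem statement8_general (α Cp Cm : ℝ) (hα : α ∈ Set.Ioo (0 : ℝ) 2)
    (m : ℝ → ℝ) (hm_nonneg : ∀ u, 0 ≤ m u)
    (hm_int : Integrable (fun u => min 1 (u ^ 2) * m u))
    (hlimp : Tendsto (fun u => u ^ (α + 1) * m u) (𝓝[>] (0 : ℝ)) (𝓝 Cp))
    (hlimm : Tendsto (fun u => |u| ^ (α + 1) * m u) (𝓝[<] (0 : ℝ)) (𝓝 Cm)) :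
    ∃ M : ℝ, ∀ t ∈ Set.Ioc (0 : ℝ) 1,
      t ^ (1 - 2 / α) * ∫ u in {u : ℝ | |u| ≤ t ^ (1 / α)}, u ^ 2 * m u ≤ M := by
  obtain ⟨hα0, hα2⟩ := hα
  obtain ⟨M, hM⟩ := exists_rpow_mul_setIntegral_sq_mul_le hα2 hm_nonneg hm_int hlimp hlimm
  refine ⟨M, fun t ⟨ht0, ht1⟩ => ?_⟩
  have hweight : t ^ (1 - 2 / α) = (t ^ (1 / α)) ^ (α - 2) := by
    rw [← rpow_mul ht0.le]
    congr 1
    field_simp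
  rw [hweight]
  exact hM _ ⟨rpow_pos_of_pos ht0 _, rpow_le_one ht0.le ht1 (by positivity)⟩

/-- Under condition H1, `sup_{t ∈ (0,1]} t^{1-2/α} ∫_{|u| ≤ t^{1/α}} u² m(u) du < ∞`. -/
theorem statement8 (α Cp Cm : ℝ) (hα : α ∈ Set.Ioo (0 : ℝ) 2)
    (hCp0 : 0 ≤ Cp) (hCm0 : 0 ≤ Cm) (hC : 0 < Cp + Cm)
    (m : ℝ → ℝ) (hm_meas : Measurable m) (hm_nonneg : ∀ u, 0 ≤ m u)
    (hm_int : Integrable (fun u => min 1 (u ^ 2) * m u))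
    (hlimp : Tendsto (fun u => u ^ (α + 1) * m u) (𝓝[>] (0 : ℝ)) (𝓝 Cp))
    (hlimm : Tendsto (fun u => |u| ^ (α + 1) * m u) (𝓝[<] (0 : ℝ)) (𝓝 Cm)) :
    ∃ M : ℝ, ∀ t ∈ Set.Ioc (0 : ℝ) 1,
      t ^ (1 - 2 / α) * ∫ u in {u : ℝ | |u| ≤ t ^ (1 / α)}, u ^ 2 * m u ≤ M :=
  statement8_general α Cp Cm hα m hm_nonneg hm_int hlimp hlimm
end

section
/- Let K be a compact topological space and let F : K → L¹(ℝ) be continuous, with F(θ)(x) ≥ 0 for Lebesgue-a.e. x for every θ ∈ K. Then sup_{θ∈K} ∫_{{x : F(θ)(x) ≤ ε}} F(θ)(x) dx → 0 as ε → 0+. -/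
/-!
For a single nonnegative integrable `f`, the integrands `f · 1_{f ≤ ε}` tend to `0` a.e. as
`ε → 0+` and are dominated by `|f|`, so `∫_{f ≤ ε} f → 0`. This is stable under
`L¹`-perturbation: on `{g ≤ ε}` one has `g ≤ |f - g| + f · 1_{f ≤ 2ε}` (if `f > 2ε` then
`g < f - g`), hence `∫_{g ≤ ε} g ≤ ‖f - g‖₁ + ∫_{f ≤ 2ε} f`. The bound is thus uniform on an
`L¹`-neighbourhood of each `F θ`, and compactness of `K` finishes the proof.
-/

open MeasureTheory Real Filter Set Topology

section

variable {α : Type*} [MeasurableSpace α] {μ : Measure α}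

theorem tendsto_setIntegral_sublevel_nhdsGT_zero {f : α → ℝ} (hf : Integrable f μ)
    (hmf : Measurable f) (hpos : 0 ≤ᵐ[μ] f) :
    Tendsto (fun ε => ∫ x in {x | f x ≤ ε}, f x ∂μ) (𝓝[>] 0) (𝓝 0) := by
  have hlim : ∀ᵐ x ∂μ, Tendsto (fun ε => {x | f x ≤ ε}.indicator f x) (𝓝[>] 0) (𝓝 0) := by
    filter_upwards [hpos] with x hx
    rcases hx.eq_or_lt with hzero | hx
    · refine tendsto_const_nhds.congr fun ε => ?_
      simp [indicator_apply, hzero.symm]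
    · refine tendsto_const_nhds.congr' ?_
      filter_upwards [nhdsWithin_le_nhds (eventually_lt_nhds hx)] with ε hε
      simp [indicator, not_le.2 hε]
  have h := tendsto_integral_filter_of_dominated_convergence (fun x => |f x|)
    (Eventually.of_forall fun ε =>
      (hmf.indicator (measurableSet_le hmf measurable_const)).aestronglyMeasurable)
    (Eventually.of_forall fun ε => Eventually.of_forall fun x => norm_indicator_le_norm_self f x)
    hf.abs hlim
  simpa [integral_indicator (measurableSet_le hmf measurable_const)] using h

theorem setIntegral_sublevel_le_integral_abs_sub_add {f g : α → ℝ} (hf : Integrable f μ)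
    (hg : Integrable g μ) (hmf : Measurable f) (hmg : Measurable g) (hpos : 0 ≤ᵐ[μ] f)
    (ε : ℝ) :
    ∫ x in {x | g x ≤ ε}, g x ∂μ ≤ ∫ x, |f x - g x| ∂μ + ∫ x in {x | f x ≤ 2 * ε}, f x ∂μ := by
  have hmeas_g : MeasurableSet {x | g x ≤ ε} := measurableSet_le hmg measurable_const
  have hmeas_f : MeasurableSet {x | f x ≤ 2 * ε} := measurableSet_le hmf measurable_const
  have habs : Integrable (fun x => |f x - g x|) μ := (hf.sub hg).abs
  rw [← integral_indicator hmeas_g, ← integral_indicator hmeas_f,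
    ← integral_add habs (hf.indicator hmeas_f)]
  refine integral_mono_ae (hg.indicator hmeas_g) (habs.add (hf.indicator hmeas_f)) ?_
  filter_upwards [hpos] with x hx
  have := le_abs_self (f x - g x)
  have := neg_abs_le (f x - g x)
  simp only [indicator, mem_ofPred_eq, Pi.zero_apply] at hx ⊢
  split_ifs <;> linarith

end

namespace MeasureTheory.L1

variable {α : Type*} [MeasurableSpace α] {μ : Measure α}

theorem eventually_setIntegral_sublevel_lt (f : α →₁[μ] ℝ) (hpos : 0 ≤ᵐ[μ] f) {δ : ℝ}
    (hδ : 0 < δ) :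
    ∀ᶠ p : ℝ × (α →₁[μ] ℝ) in 𝓝[>] 0 ×ˢ 𝓝 f, ∫ x in {x | p.2 x ≤ p.1}, p.2 x ∂μ < δ := by
  have hmf := (Lp.stronglyMeasurable f).measurable
  have htwice : Tendsto (fun ε : ℝ => 2 * ε) (𝓝[>] 0) (𝓝[>] 0) :=
    tendsto_nhdsWithin_of_tendsto_nhds_of_eventually_within _
      (((continuous_const_mul 2).tendsto' 0 0 (mul_zero 2)).mono_left nhdsWithin_le_nhds)
      (eventually_nhdsWithin_of_forall fun ε (hε : 0 < ε) => mul_pos two_pos hε)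
  have hsmall : ∀ᶠ ε in 𝓝[>] 0, ∫ x in {x | f x ≤ 2 * ε}, f x ∂μ < δ / 2 :=
    htwice.eventually <| (tendsto_setIntegral_sublevel_nhdsGT_zero (L1.integrable_coeFn f) hmf
      hpos).eventually (eventually_lt_nhds (half_pos hδ))
  have hclose : ∀ᶠ g in 𝓝 f, dist f g < δ / 2 :=
    Eventually.mono (Metric.ball_mem_nhds f (half_pos hδ)) fun g hg => by rwa [dist_comm]
  filter_upwards [hsmall.prod_mk hclose] with ⟨ε, g⟩ ⟨hε, hg⟩
  rw [L1.dist_eq_integral_dist] at hg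
  have hbound := setIntegral_sublevel_le_integral_abs_sub_add (L1.integrable_coeFn f)
    (L1.integrable_coeFn g) hmf (Lp.stronglyMeasurable g).measurable hpos ε
  simp only [Real.dist_eq] at hg
  linarith

end MeasureTheory.L1

/-- If `K` is compact and `F : K → L¹(ℝ)` is continuous with `F θ ≥ 0` a.e. for each `θ`,
then `sup_{θ ∈ K} ∫_{{F θ ≤ ε}} F θ → 0` as `ε → 0+`. -/
theorem statement15 (K : Type*) [TopologicalSpace K] [CompactSpace K]
    (F : K → Lp ℝ 1 (volume : Measure ℝ)) (hF : Continuous F)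
    (hpos : ∀ θ : K, 0 ≤ᵐ[volume] (F θ : ℝ → ℝ)) :
    ∀ δ > (0 : ℝ), ∀ᶠ ε in 𝓝[>] (0 : ℝ), ∀ θ : K,
      ∫ x in {x : ℝ | (F θ : ℝ → ℝ) x ≤ ε}, (F θ : ℝ → ℝ) x < δ := by
  intro δ hδ
  have hlocal : ∀ θ ∈ univ, {p : ℝ × K | ∫ x in {x | F p.2 x ≤ p.1}, F p.2 x < δ} ∈
      𝓝[>] 0 ×ˢ 𝓝 θ := fun θ _ =>
    (tendsto_id.prodMap (hF.tendsto θ)).eventually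
      (L1.eventually_setIntegral_sublevel_lt (F θ) (hpos θ) hδ)
  have := isCompact_univ.mem_prod_nhdsSet_of_forall hlocal
  rwa [nhdsSet_univ, mem_prod_top] at this
end
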